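/- arXiv:cs/0702027 — 2 statements merged into one kernel-verified Lean document; each statement's English description precedes it below -/
import Mathlib

section
/- Let R and S be two binary relations on a set X, with R confluent and strongly normalizing, and S strongly confluent (satisfying the diamond property: if f S g and f S h then there exists k with g S k and h S k). Suppose further that R and S commute in the following weak sense: if f S g and f R h, then there exists k with g R* k and h (R* ∘ S ∘ R*) k. Then the composite relation R* ∘ S ∘ R* is confluent. -/
open Relation

/-- The composite relation R* ∘ S ∘ R*. -/
def RSRel {X : Type*} (R S : X → X → Prop) : X → X → Prop :=
  fun a b => ∃ u v, Relation.ReflTransGen R a u ∧ S u v ∧ Relation.ReflTransGen R v b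

/-- Strong normalization gives well-foundedness of the flipped relation. -/
lemma sn_wf {X : Type*} (R : X → X → Prop)
    (hRsn : ¬ ∃ f : ℕ → X, ∀ n, R (f n) (f (n + 1))) :
    WellFounded (fun a b => R b a) := by
  classical
  constructor
  intro a
  by_contra hna
  have key : ∀ x, ¬ Acc (fun a b => R b a) x → ∃ y, R x y ∧ ¬ Acc (fun a b => R b a) y := by
    intro x hx
    by_contra h
    push_neg at h
    exact hx (Acc.intro x fun y hy => h y hy)
  choose F hF1 hF2 using key
  let g : ℕ → {x : X // ¬ Acc (fun a b => R b a) x} := fun n =>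
    Nat.rec ⟨a, hna⟩ (fun _ p => ⟨F p.1 p.2, hF2 p.1 p.2⟩) n
  exact hRsn ⟨fun n => (g n).1, fun n => hF1 (g n).1 (g n).2⟩

/-- The push lemma: an `S` step can be pushed along `R*` reductions. -/
lemma push_lemma {X : Type*} (R S : X → X → Prop)
    (hRconf : ∀ x y z, Relation.ReflTransGen R x y → Relation.ReflTransGen R x z →
      ∃ w, Relation.ReflTransGen R y w ∧ Relation.ReflTransGen R z w)
    (hRsn : ¬ ∃ f : ℕ → X, ∀ n, R (f n) (f (n + 1)))
    (hcomm : ∀ f g h, S f g → R f h →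
      ∃ k, Relation.ReflTransGen R g k ∧ RSRel R S h k) :
    ∀ a b c, S a b → Relation.ReflTransGen R a c →
      ∃ k, Relation.ReflTransGen R b k ∧ RSRel R S c k := by
  have hwf : WellFounded (Relation.TransGen (fun a b => R b a)) :=
    (sn_wf R hRsn).transGen
  intro a
  induction a using hwf.induction with
  | _ a IH =>
    intro b c hS hac
    rcases hac.cases_head with rfl | ⟨a', haa', ha'c⟩
    · exact ⟨b, Relation.ReflTransGen.refl,
        ⟨a, b, Relation.ReflTransGen.refl, hS, Relation.ReflTransGen.refl⟩⟩
    · obtain ⟨k1, hbk1, p, q, ha'p, hSpq, hqk1⟩ := hcomm a b a' hS haa'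
      obtain ⟨d, hcd, hpd⟩ := hRconf a' c p ha'c ha'p
      have hp_lt : Relation.TransGen (fun a b => R b a) p a := by
        have : Relation.TransGen R a p :=
          Relation.TransGen.head' haa' ha'p
        exact this.swap
      obtain ⟨k2, hqk2, α, β, hdα, hSαβ, hβk2⟩ := IH p hp_lt q d hSpq hpd
      obtain ⟨e, hk1e, hk2e⟩ := hRconf q k1 k2 hqk1 hqk2
      exact ⟨e, hbk1.trans hk1e,
        ⟨α, β, hcd.trans hdα, hSαβ, hβk2.trans hk2e⟩⟩

/-- if R is confluent and strongly normalizing, S is strongly confluent,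
and R, S commute in the stated weak sense, then R* ∘ S ∘ R* is confluent. -/
theorem stmt9 {X : Type*} (R S : X → X → Prop)
    (hRconf : ∀ x y z, Relation.ReflTransGen R x y → Relation.ReflTransGen R x z →
      ∃ w, Relation.ReflTransGen R y w ∧ Relation.ReflTransGen R z w)
    (hRsn : ¬ ∃ f : ℕ → X, ∀ n, R (f n) (f (n + 1)))
    (hSdiam : ∀ f g h, S f g → S f h → ∃ k, S g k ∧ S h k)
    (hcomm : ∀ f g h, S f g → R f h →
      ∃ k, Relation.ReflTransGen R g k ∧ RSRel R S h k) :
    ∀ x y z, Relation.ReflTransGen (RSRel R S) x y →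
      Relation.ReflTransGen (RSRel R S) x z →
      ∃ w, Relation.ReflTransGen (RSRel R S) y w ∧
           Relation.ReflTransGen (RSRel R S) z w := by
  classical
  have hwf : WellFounded (fun a b => R b a) := sn_wf R hRsn
  have hpush := push_lemma R S hRconf hRsn hcomm
  -- normal forms exist
  have hnf_ex : ∀ x : X, ∃ m, Relation.ReflTransGen R x m ∧ ∀ y, ¬ R m y := by
    intro x
    induction x using hwf.induction with
    | _ x IH =>
      by_cases hx : ∃ y, R x y
      · obtain ⟨y, hy⟩ := hx
        obtain ⟨m, hym, hm⟩ := IH y hy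
        exact ⟨m, Relation.ReflTransGen.head hy hym, hm⟩
      · push_neg at hx
        exact ⟨x, Relation.ReflTransGen.refl, hx⟩
  choose nf hnf hnfnorm using hnf_ex
  -- a normal form absorbs R*: if m is normal, R* m d implies d = m
  have hnorm_eq : ∀ m d, (∀ y, ¬ R m y) → Relation.ReflTransGen R m d → d = m := by
    intro m d hm hmd
    rcases hmd.cases_head with rfl | ⟨c, hmc, _⟩
    · rfl
    · exact absurd hmc (hm c)
  -- if R* x u then R* u (nf x)
  have hto_nf : ∀ x u, Relation.ReflTransGen R x u → Relation.ReflTransGen R u (nf x) := by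
    intro x u hxu
    obtain ⟨d, hud, hnd⟩ := hRconf x u (nf x) hxu (hnf x)
    rwa [hnorm_eq (nf x) d (hnfnorm x) hnd] at hud
  -- key lemma K: an S-step between points maps to an S-step between normal forms
  have hK : ∀ u v m m', S u v → Relation.ReflTransGen R u m → (∀ y, ¬ R m y) →
      Relation.ReflTransGen R v m' → (∀ y, ¬ R m' y) →
      ∃ q, S m q ∧ Relation.ReflTransGen R q m' := by
    intro u v m m' hS hum hm hvm' hm'
    obtain ⟨k, hvk, p, q, hmp, hSpq, hqk⟩ := hpush u v m hS hum
    have hpm : p = m := hnorm_eq m p hm hmp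
    subst hpm
    obtain ⟨d, hkd, hm'd⟩ := hRconf v k m' hvk hvm'
    have : d = m' := hnorm_eq m' d hm' hm'd
    subst this
    exact ⟨q, hSpq, hqk.trans hkd⟩
  -- diamond property for T := RSRel R S
  have hTdiam : ∀ x y z, RSRel R S x y → RSRel R S x z →
      ∃ w, RSRel R S y w ∧ RSRel R S z w := by
    intro x y z ⟨u, v, hxu, hSuv, hvy⟩ ⟨u', v', hxu', hSu'v', hv'z⟩
    have hum : Relation.ReflTransGen R u (nf x) := hto_nf x u hxu
    have hu'm : Relation.ReflTransGen R u' (nf x) := hto_nf x u' hxu'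
    have hvmy : Relation.ReflTransGen R v (nf y) := hvy.trans (hnf y)
    have hv'mz : Relation.ReflTransGen R v' (nf z) := hv'z.trans (hnf z)
    obtain ⟨q1, hSq1, hq1my⟩ := hK u v (nf x) (nf y) hSuv hum (hnfnorm x) hvmy (hnfnorm y)
    obtain ⟨q2, hSq2, hq2mz⟩ := hK u' v' (nf x) (nf z) hSu'v' hu'm (hnfnorm x) hv'mz (hnfnorm z)
    obtain ⟨k, hq1k, hq2k⟩ := hSdiam (nf x) q1 q2 hSq1 hSq2
    obtain ⟨e1, hke1, p1, r1, hmyp1, hSr1, hr1e1⟩ := hpush q1 k (nf y) hq1k hq1my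
    obtain ⟨e2, hke2, p2, r2, hmzp2, hSr2, hr2e2⟩ := hpush q2 k (nf z) hq2k hq2mz
    have hp1 : p1 = nf y := hnorm_eq (nf y) p1 (hnfnorm y) hmyp1
    have hp2 : p2 = nf z := hnorm_eq (nf z) p2 (hnfnorm z) hmzp2
    subst hp1; subst hp2
    obtain ⟨w, he1w, he2w⟩ := hRconf k e1 e2 hke1 hke2
    exact ⟨w, ⟨nf y, r1, hnf y, hSr1, hr1e1.trans he1w⟩,
      ⟨nf z, r2, hnf z, hSr2, hr2e2.trans he2w⟩⟩
  intro x y z hxy hxz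
  have := Relation.church_rosser
    (fun a b c hab hac => by
      obtain ⟨w, hbw, hcw⟩ := hTdiam a b c hab hac
      exact ⟨w, Relation.ReflGen.single hbw, Relation.ReflTransGen.single hcw⟩)
    hxy hxz
  exact this
end

section
/- The s-rules of the λs-calculus are strongly normalizing: every reduction sequence using only the rules σ-λ-transition, σ-app-transition, σ-destruction, φ-λ-transition, φ-app-transition, and φ-destruction terminates. -/
/-- λs-terms. -/
inductive LsTm : Type
  | idx : ℕ → LsTm                 -- de Bruijn index n
  | app : LsTm → LsTm → LsTm
  | lam : LsTm → LsTm
  | sig : LsTm → ℕ → LsTm → LsTm   -- a σ^i b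
  | phi : ℕ → ℕ → LsTm → LsTm      -- φ^i_k a

/-- One step of the s-rules of the λs-calculus (all rules except σ-generation),
applied anywhere. -/
inductive SStep : LsTm → LsTm → Prop
  | sigLam : ∀ (a : LsTm) (i : ℕ) (b : LsTm),
      SStep (.sig (.lam a) i b) (.lam (.sig a (i + 1) b))
  | sigApp : ∀ (a1 a2 : LsTm) (i : ℕ) (b : LsTm),
      SStep (.sig (.app a1 a2) i b) (.app (.sig a1 i b) (.sig a2 i b))
  | sigGt : ∀ (n i : ℕ) (b : LsTm), i < n → SStep (.sig (.idx n) i b) (.idx (n - 1))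
  | sigEq : ∀ (i : ℕ) (b : LsTm), SStep (.sig (.idx i) i b) (.phi i 0 b)
  | sigLt : ∀ (n i : ℕ) (b : LsTm), n < i → SStep (.sig (.idx n) i b) (.idx n)
  | phiLam : ∀ (i k : ℕ) (a : LsTm),
      SStep (.phi i k (.lam a)) (.lam (.phi i (k + 1) a))
  | phiApp : ∀ (i k : ℕ) (a1 a2 : LsTm),
      SStep (.phi i k (.app a1 a2)) (.app (.phi i k a1) (.phi i k a2))
  | phiGt : ∀ (i k n : ℕ), k < n → SStep (.phi i k (.idx n)) (.idx (n + i - 1))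
  | phiLe : ∀ (i k n : ℕ), n ≤ k → SStep (.phi i k (.idx n)) (.idx n)
  | appL : ∀ (a a' b : LsTm), SStep a a' → SStep (.app a b) (.app a' b)
  | appR : ∀ (a b b' : LsTm), SStep b b' → SStep (.app a b) (.app a b')
  | lamC : ∀ (a a' : LsTm), SStep a a' → SStep (.lam a) (.lam a')
  | sigL : ∀ (a a' : LsTm) (i : ℕ) (b : LsTm), SStep a a' → SStep (.sig a i b) (.sig a' i b)
  | sigR : ∀ (a : LsTm) (i : ℕ) (b b' : LsTm), SStep b b' → SStep (.sig a i b) (.sig a i b')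
  | phiC : ∀ (i k : ℕ) (a a' : LsTm), SStep a a' → SStep (.phi i k a) (.phi i k a')


/-- Weight measure strictly decreasing under `SStep`. -/
def wt : LsTm → ℕ
  | .idx _ => 1
  | .app a b => wt a + wt b + 1
  | .lam a => wt a + 1
  | .sig a _ b => wt a * (2 * wt b + 1)
  | .phi _ _ a => 2 * wt a

lemma wt_pos : ∀ a, 0 < wt a
  | .idx _ => Nat.one_pos
  | .app a b => by simp [wt]
  | .lam a => by simp [wt]
  | .sig a _ b => by have := wt_pos a; simp [wt]; positivity
  | .phi _ _ a => by have := wt_pos a; simp [wt]; omega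

lemma wt_decreases : ∀ {a b : LsTm}, SStep a b → wt b < wt a := by
  intro a b h
  induction h with
  | sigLam a i b => simp [wt]; nlinarith [wt_pos a, wt_pos b]
  | sigApp a1 a2 i b => simp [wt]; nlinarith [wt_pos b]
  | sigGt n i b _ => simp [wt]; nlinarith [wt_pos b]
  | sigEq i b => simp [wt]
  | sigLt n i b _ => simp [wt]; nlinarith [wt_pos b]
  | phiLam i k a => simp [wt]; omega
  | phiApp i k a1 a2 => simp [wt]; omega
  | phiGt i k n _ => simp [wt]
  | phiLe i k n _ => simp [wt]
  | appL a a' c _ ih => simp [wt]; omega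
  | appR a c c' _ ih => simp [wt]; omega
  | lamC a a' _ ih => simp [wt]; omega
  | sigL a a' i c _ ih => simp [wt]; nlinarith [wt_pos c]
  | sigR a i c c' _ ih => simp [wt]; nlinarith [wt_pos a]
  | phiC i k a a' _ ih => simp [wt]; omega

/-- the s-rules of the λs-calculus are strongly normalizing:
there is no infinite s-reduction sequence. -/
theorem stmt16 : ∀ f : ℕ → LsTm, ¬ (∀ n, SStep (f n) (f (n + 1))) := by
  intro f h
  have : ∀ n, wt (f (n + 1)) < wt (f n) := fun n => wt_decreases (h n)
  have key : ∀ m n, wt (f n) ≤ m → False := by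
    intro m
    induction m with
    | zero => intro n hn; exact absurd (wt_pos (f n)) (by omega)
    | succ m ih => intro n hn; exact ih (n + 1) (by have := this n; omega)
  exact key (wt (f 0)) 0 le_rfl
end
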